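/- arXiv:2204.02858 — 2 statements merged into one kernel-verified Lean document; each statement's English description precedes it below -/
import Mathlib

section
/- Let D be a directed graph and Γ an abelian group. There exists a proper vertex colouring of the underlying graph of D with elements of Γ (adjacent vertices receive distinct colours) if and only if there exists a nowhere-zero Γ-co-flow on D, i.e., an assignment of nonzero elements of Γ to the edges such that every cycle has effective length 0, where the effective length of a cycle is the sum of the weights of its forward edges minus the sum of the weights of its backward edges. -/
open Classical

/-- The underlying simple graph of a digraph given by its set `E` of directed
edges (ordered pairs of distinct vertices). -/
def underlyingGraph {V : Type*} (E : Set (V × V)) : SimpleGraph V :=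
  SimpleGraph.fromRel (fun u v => (u, v) ∈ E)

/-- The effective length of a walk in the underlying graph of a digraph with edge
set `E`, with edge weights `w` in an abelian group: forward edges count
positively, backward edges negatively. -/
noncomputable def effLen {V Γ : Type*} [AddCommGroup Γ] (E : Set (V × V)) (w : V × V → Γ)
    {a b : V} (p : (underlyingGraph E).Walk a b) : Γ :=
  (p.darts.map (fun d =>
    if d.toProd ∈ E then w d.toProd else - w (d.toProd.2, d.toProd.1))).sum

section Aux

open SimpleGraph

variable {V Γ : Type*} [AddCommGroup Γ] (E : Set (V × V)) (w : V × V → Γ)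

lemma adj_iff {a b : V} : (underlyingGraph E).Adj a b ↔ a ≠ b ∧ ((a, b) ∈ E ∨ (b, a) ∈ E) := by
  simp [underlyingGraph, SimpleGraph.fromRel_adj]

@[simp] lemma effLen_nil {a : V} : effLen E w (Walk.nil : (underlyingGraph E).Walk a a) = 0 :=
  rfl

@[simp] lemma effLen_cons {a b c : V} (h : (underlyingGraph E).Adj a b)
    (p : (underlyingGraph E).Walk b c) :
    effLen E w (Walk.cons h p) =
      (if (a, b) ∈ E then w (a, b) else - w (b, a)) + effLen E w p := by
  simp [effLen, Walk.darts_cons]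

@[simp] lemma effLen_append {a b c : V} (p : (underlyingGraph E).Walk a b)
    (q : (underlyingGraph E).Walk b c) :
    effLen E w (p.append q) = effLen E w p + effLen E w q := by
  simp [effLen, Walk.darts_append]

@[simp] lemma effLen_copy {a b a' b' : V} (p : (underlyingGraph E).Walk a b)
    (h1 : a = a') (h2 : b = b') : effLen E w (p.copy h1 h2) = effLen E w p := by
  subst h1; subst h2; rw [Walk.copy_rfl_rfl]

lemma contrib_symm (hasym : ∀ p ∈ E, (p.2, p.1) ∉ E) {a b : V}
    (h : (underlyingGraph E).Adj a b) :
    (if (b, a) ∈ E then w (b, a) else - w (a, b)) =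
      - (if (a, b) ∈ E then w (a, b) else - w (b, a)) := by
  rcases (adj_iff E).mp h with ⟨hne, hab | hba⟩
  · rw [if_pos hab, if_neg (hasym _ hab)]
  · rw [if_pos hba, if_neg (hasym _ hba), neg_neg]

lemma effLen_reverse (hasym : ∀ p ∈ E, (p.2, p.1) ∉ E) {a b : V}
    (p : (underlyingGraph E).Walk a b) :
    effLen E w p.reverse = - effLen E w p := by
  induction p with
  | nil => simp
  | cons h q ih =>
    rw [Walk.reverse_cons]
    rw [effLen_append, effLen_cons, ih, effLen_cons, effLen_nil,
      contrib_symm E w hasym h]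
    abel

/-- Every closed walk has effective length `0`, given that every cycle does. -/
lemma effLen_closed (hasym : ∀ p ∈ E, (p.2, p.1) ∉ E)
    (hcyc : ∀ (a : V) (p : (underlyingGraph E).Walk a a), p.IsCycle → effLen E w p = 0) :
    ∀ (n : ℕ) (a : V) (p : (underlyingGraph E).Walk a a), p.length ≤ n → effLen E w p = 0 := by
  classical
  intro n
  induction n with
  | zero =>
    intro a p hp
    cases p with
    | nil => simp
    | cons h q => simp [Walk.length_cons] at hp
  | succ n ih =>
    intro a p hp
    cases p with
    | nil => simp
    | cons h q =>
      rename_i b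
      rw [Walk.length_cons] at hp
      have hqn : q.length ≤ n := by omega
      by_cases hdup : q.support.Nodup
      · -- `q` is a path
        by_cases he : s(a, b) ∈ q.edges
        · -- the edge between `a` and `b` occurs in `q`: then `q` is a single edge
          cases q with
          | nil => simp at he
          | cons h1 q1 =>
            rename_i c'
            rw [Walk.edges_cons, List.mem_cons] at he
            rcases he with he | he
            · have hac : a = c' := by
                rcases Sym2.eq_iff.mp he with ⟨h1', h2'⟩ | ⟨h1', _⟩
                · exact absurd h1' h.ne
                · exact h1'
              subst hac
              -- q1 : Walk a a with nodup support, hence nil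
              have hq1 : q1 = Walk.nil := by
                cases q1 with
                | nil => rfl
                | cons h3 q3 =>
                  exfalso
                  rw [Walk.support_cons, Walk.support_cons, List.nodup_cons,
                    List.nodup_cons] at hdup
                  exact hdup.2.1 (Walk.end_mem_support q3)
              subst hq1
              rw [effLen_cons, effLen_cons, effLen_nil, add_zero,
                contrib_symm E w hasym h]
              abel
            · exfalso
              have : b ∈ q1.support := Walk.snd_mem_support_of_mem_edges q1 he
              rw [Walk.support_cons, List.nodup_cons] at hdup
              exact hdup.1 this
        · exact hcyc a (Walk.cons h q)
            ((Walk.cons_isCycle_iff q h).mpr ⟨(Walk.isPath_def q).mpr hdup, he⟩)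
      · -- `q` has a repeated vertex `v`; split the walk into two shorter closed walks
        obtain ⟨v, hv2⟩ := List.exists_duplicate_iff_not_nodup.mpr hdup
        have hv2' : 2 ≤ q.support.count v := List.duplicate_iff_two_le_count.mp hv2
        have hv : v ∈ q.support := hv2.mem
        have hspec := q.take_spec hv
        have hcount1 := q.count_support_takeUntil_eq_one hv
        have hvtail : v ∈ (q.dropUntil v hv).support.tail := by
          have hcnt : q.support.count v =
              (q.takeUntil v hv).support.count v +
                (q.dropUntil v hv).support.tail.count v := by
            conv_lhs => rw [← hspec]
            rw [Walk.support_append, List.count_append]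
          rw [← List.count_pos_iff]
          omega
        cases hdd : q.dropUntil v hv with
        | nil => rw [hdd] at hvtail; simp at hvtail
        | cons h2 d2 =>
          rename_i v2
          rw [hdd] at hvtail
          rw [Walk.support_cons, List.tail_cons] at hvtail
          have hef := d2.take_spec hvtail
          have hq : q = (q.takeUntil v hv).append
              (Walk.cons h2 ((d2.takeUntil v hvtail).append (d2.dropUntil v hvtail))) := by
            rw [hef, ← hdd, hspec]
          -- lengths
          have hlen : q.length = (q.takeUntil v hv).length + 1 +
              ((d2.takeUntil v hvtail).length + (d2.dropUntil v hvtail).length) := by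
            have h' := congrArg Walk.length hq
            rw [Walk.length_append, Walk.length_cons, Walk.length_append] at h'
            omega
          have h1 : effLen E w
              (Walk.cons h ((q.takeUntil v hv).append (d2.dropUntil v hvtail))) = 0 := by
            apply ih
            rw [Walk.length_cons, Walk.length_append]
            omega
          have h2' : effLen E w (Walk.cons h2 (d2.takeUntil v hvtail)) = 0 := by
            apply ih
            rw [Walk.length_cons]
            omega
          have key : effLen E w (Walk.cons h q) =
              effLen E w (Walk.cons h ((q.takeUntil v hv).append (d2.dropUntil v hvtail))) +
                effLen E w (Walk.cons h2 (d2.takeUntil v hvtail)) := by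
            conv_lhs => rw [hq]
            simp only [effLen_cons, effLen_append]
            abel
          rw [key, h1, h2', add_zero]

lemma effLen_walk_eq (hasym : ∀ p ∈ E, (p.2, p.1) ∉ E)
    (hcyc : ∀ (a : V) (p : (underlyingGraph E).Walk a a), p.IsCycle → effLen E w p = 0)
    {a b : V} (p q : (underlyingGraph E).Walk a b) : effLen E w p = effLen E w q := by
  have h0 := effLen_closed E w hasym hcyc (p.append q.reverse).length a (p.append q.reverse)
    le_rfl
  rw [effLen_append, effLen_reverse E w hasym] at h0
  exact add_neg_eq_zero.mp h0

lemma effLen_eq_sub (c : V → Γ) {a b : V} (p : (underlyingGraph E).Walk a b) :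
    effLen E (fun e => c e.2 - c e.1) p = c b - c a := by
  induction p with
  | nil => simp
  | cons h q ih =>
    rename_i u v' w'
    rw [effLen_cons, ih]
    have : (if (u, v') ∈ E then c v' - c u else - (c u - c v')) = c v' - c u := by
      split <;> abel
    rw [this]
    abel

end Aux

/-- A digraph admits a proper vertex colouring of its underlying graph by elements
of an abelian group `Γ` iff it carries a nowhere-zero `Γ`-co-flow, i.e. a
nowhere-zero edge labelling in `Γ` for which every cycle has effective length `0`. -/
theorem colouring_iff_nowhere_zero_coflow {V Γ : Type*} [AddCommGroup Γ]
    (E : Set (V × V)) (hirr : ∀ p ∈ E, p.1 ≠ p.2)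
    (hasym : ∀ p ∈ E, (p.2, p.1) ∉ E) :
    (∃ c : V → Γ, ∀ u v, (underlyingGraph E).Adj u v → c u ≠ c v) ↔
      (∃ w : V × V → Γ, (∀ e ∈ E, w e ≠ 0) ∧
        ∀ (a : V) (p : (underlyingGraph E).Walk a a), p.IsCycle → effLen E w p = 0) := by
  classical
  constructor
  · rintro ⟨c, hc⟩
    refine ⟨fun e => c e.2 - c e.1, ?_, ?_⟩
    · intro e he
      have hadj : (underlyingGraph E).Adj e.1 e.2 := (adj_iff E).mpr ⟨hirr e he, Or.inl he⟩
      exact sub_ne_zero.mpr (Ne.symm (hc e.1 e.2 hadj))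
    · intro a p _
      rw [effLen_eq_sub, sub_self]
  · rintro ⟨w, hw0, hcyc⟩
    set G := underlyingGraph E with hG
    have hout : ∀ cc : G.ConnectedComponent, G.connectedComponentMk cc.out = cc :=
      fun cc => cc.out_eq
    have hreach : ∀ v : V, G.Reachable ((G.connectedComponentMk v).out) v := by
      intro v
      exact SimpleGraph.ConnectedComponent.exact (hout _)
    let p : ∀ v : V, G.Walk ((G.connectedComponentMk v).out) v := fun v => (hreach v).some
    refine ⟨fun v => effLen E w (p v), ?_⟩
    intro u v huv hceq
    have hr : (G.connectedComponentMk v).out = (G.connectedComponentMk u).out := by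
      rw [SimpleGraph.ConnectedComponent.connectedComponentMk_eq_of_adj huv]
    let q : G.Walk ((G.connectedComponentMk v).out) v :=
      ((p u).append (SimpleGraph.Walk.cons huv SimpleGraph.Walk.nil)).copy hr.symm rfl
    have hpq : effLen E w (p v) = effLen E w q :=
      effLen_walk_eq E w hasym hcyc _ _
    have hq : effLen E w q =
        effLen E w (p u) + (if (u, v) ∈ E then w (u, v) else - w (v, u)) := by
      simp [q]
    have hF : (if (u, v) ∈ E then w (u, v) else - w (v, u)) ≠ 0 := by
      rcases (adj_iff E).mp huv with ⟨hne, huv' | hvu⟩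
      · rw [if_pos huv']; exact hw0 _ huv'
      · rw [if_neg (fun h => hasym _ h hvu), neg_ne_zero]; exact hw0 _ hvu
    apply hF
    have heq2 : effLen E w (p u) =
        effLen E w (p u) + (if (u, v) ∈ E then w (u, v) else - w (v, u)) := by
      rw [← hq, ← hpq]; exact hceq
    exact (left_eq_add.mp heq2)
end

section
/- Let D be a directed graph with every edge labelled by the same fixed nonzero element d of ZMod k. If every cycle of D has effective length 0 mod k, then the underlying graph of D is properly k-vertex-colourable. -/
open Classical

/-! Weight each dart of the underlying graph by `d` or `-d` according to whether it follows
an arc of the digraph; reversing a dart negates its weight. Shortcutting a closed walk to a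
path with `bypass` only removes loops that are cycles or an edge traversed back and forth,
so every closed walk has weight `0`. Hence the weight is a coboundary: some `φ : V → ZMod k`
changes by `±d ≠ 0` along every edge, and `φ` is a proper colouring with `k` colours. -/

namespace SimpleGraph.Walk

variable {V Γ : Type*} [AddCommGroup Γ] {G : SimpleGraph V} {f : G.Dart → Γ}

theorem sum_darts_reverse (hf : ∀ x, f x.symm = -f x) {u v : V} (p : G.Walk u v) :
    (p.reverse.darts.map f).sum = -(p.darts.map f).sum := by
  rw [darts_reverse, List.map_reverse, List.sum_reverse, List.map_map, List.sum_neg,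
    List.map_map]
  exact congrArg List.sum (List.map_congr_left fun x _ => hf x)

variable (hf : ∀ x, f x.symm = -f x)
  (hcyc : ∀ (a : V) (c : G.Walk a a), c.IsCycle → (c.darts.map f).sum = 0)
include hf hcyc

theorem sum_darts_cons_eq_zero_of_isPath {u v : V} (h : G.Adj u v) {q : G.Walk v u}
    (hq : q.IsPath) : ((cons h q).darts.map f).sum = 0 := by
  by_cases he : s(u, v) ∈ q.edges
  · rw [hq.eq_adj_toWalk_of_mem_edges (Sym2.eq_swap ▸ he)]
    have := hf ⟨(u, v), h⟩
    simp only [Dart.symm, Prod.swap_prod_mk] at this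
    simp [Adj.toWalk, this]
  · exact hcyc u _ ((cons_isCycle_iff q h).mpr ⟨hq, he⟩)

theorem sum_darts_bypass [DecidableEq V] {u v : V} (p : G.Walk u v) :
    (p.bypass.darts.map f).sum = (p.darts.map f).sum := by
  induction p with
  | nil => rfl
  | @cons u v w h p ih =>
    rw [bypass, darts_cons, List.map_cons, List.sum_cons, ← ih]
    split_ifs with hu
    · have hloop := sum_darts_cons_eq_zero_of_isPath hf hcyc h
        (p.bypass_isPath.takeUntil hu)
      conv_rhs => rw [← p.bypass.take_spec hu]
      rw [darts_cons, List.map_cons, List.sum_cons] at hloop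
      rw [darts_append, List.map_append, List.sum_append, ← add_assoc, hloop, zero_add]
    · rfl

theorem sum_darts_eq_zero_of_closed {u : V} (p : G.Walk u u) : (p.darts.map f).sum = 0 := by
  classical
  rw [← sum_darts_bypass hf hcyc, isPath_iff_nil.mp p.bypass_isPath |>.eq_nil]
  rfl

end SimpleGraph.Walk

namespace SimpleGraph

variable {V Γ : Type*} [AddCommGroup Γ] {G : SimpleGraph V} {f : G.Dart → Γ}

theorem exists_potential_of_forall_isCycle_sum_darts_eq_zero (hf : ∀ x, f x.symm = -f x)
    (hcyc : ∀ (a : V) (c : G.Walk a a), c.IsCycle → (c.darts.map f).sum = 0) :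
    ∃ φ : V → Γ, ∀ x : G.Dart, φ x.snd = φ x.fst + f x := by
  have hroot (v : V) : G.Reachable (G.connectedComponentMk v).out v :=
    ConnectedComponent.exact (G.connectedComponentMk v).out_eq
  refine ⟨fun v => ((hroot v).some.darts.map f).sum, fun x => ?_⟩
  have hsame : (G.connectedComponentMk x.fst).out = (G.connectedComponentMk x.snd).out :=
    congrArg Quot.out (ConnectedComponent.sound x.adj.reachable)
  have hloop := Walk.sum_darts_eq_zero_of_closed hf hcyc
    (((hroot x.fst).some.append (Walk.cons x.adj (hroot x.snd).some.reverse)).copy hsame rfl)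
  rw [Walk.darts_copy, Walk.darts_append, Walk.darts_cons, List.map_append, List.sum_append,
    List.map_cons, List.sum_cons, Walk.sum_darts_reverse hf] at hloop
  rw [← sub_eq_zero, ← neg_eq_zero, ← hloop]
  abel

end SimpleGraph

open SimpleGraph

section OrientedWeight

variable {V Γ : Type*} [AddCommGroup Γ] {E : Set (V × V)}

noncomputable def orientedWeight (E : Set (V × V)) (w : V × V → Γ)
    (x : (underlyingGraph E).Dart) : Γ :=
  if x.toProd ∈ E then w x.toProd else -w (x.toProd.2, x.toProd.1)

theorem effLen_eq_sum_darts_orientedWeight (w : V × V → Γ) {a b : V}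
    (p : (underlyingGraph E).Walk a b) :
    effLen E w p = (p.darts.map (orientedWeight E w)).sum := rfl

theorem orientedWeight_symm (hasym : ∀ p ∈ E, (p.2, p.1) ∉ E) (w : V × V → Γ)
    (x : (underlyingGraph E).Dart) :
    orientedWeight E w x.symm = -orientedWeight E w x := by
  obtain ⟨⟨u, v⟩, huv⟩ := x
  obtain ⟨-, h | h⟩ := (fromRel_adj _ _ _).mp huv <;>
    simp [orientedWeight, Dart.symm, h, hasym _ h]

theorem orientedWeight_const_ne_zero {d : Γ} (hd : d ≠ 0) (x : (underlyingGraph E).Dart) :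
    orientedWeight E (fun _ => d) x ≠ 0 := by
  unfold orientedWeight
  split_ifs <;> simpa using hd

end OrientedWeight

theorem colourable_of_constant_weight_coflow_general {V : Type*} (k : ℕ) (hk : 1 ≤ k)
    (d : ZMod k) (hd : d ≠ 0)
    (E : Set (V × V))
    (hasym : ∀ p ∈ E, (p.2, p.1) ∉ E)
    (hcyc : ∀ (a : V) (p : (underlyingGraph E).Walk a a), p.IsCycle →
      effLen E (fun _ => d) p = 0) :
    (underlyingGraph E).Colorable k := by
  have : NeZero k := ⟨by omega⟩
  obtain ⟨φ, hφ⟩ := exists_potential_of_forall_isCycle_sum_darts_eq_zero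
    (orientedWeight_symm hasym fun _ => d)
    (by simpa only [effLen_eq_sum_darts_orientedWeight] using hcyc)
  have hproper {u v : V} (huv : (underlyingGraph E).Adj u v) : φ u ≠ φ v := fun heq =>
    orientedWeight_const_ne_zero hd ⟨(u, v), huv⟩ (by simpa [heq] using hφ ⟨(u, v), huv⟩)
  simpa using (Coloring.mk φ hproper).colorable

/-- If every edge of a digraph carries the same nonzero weight `d : ZMod k` and
every cycle of the underlying graph has effective length `0`, then the underlying
graph is properly `k`-vertex-colourable. -/
theorem colourable_of_constant_weight_coflow {V : Type*} (k : ℕ) (hk : 1 ≤ k)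
    (d : ZMod k) (hd : d ≠ 0)
    (E : Set (V × V)) (hirr : ∀ p ∈ E, p.1 ≠ p.2)
    (hasym : ∀ p ∈ E, (p.2, p.1) ∉ E)
    (hcyc : ∀ (a : V) (p : (underlyingGraph E).Walk a a), p.IsCycle →
      effLen E (fun _ => d) p = 0) :
    (underlyingGraph E).Colorable k :=
  colourable_of_constant_weight_coflow_general k hk d hd E hasym hcyc
end
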